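/- For all natural numbers h ≤ k, the word ψ(h,k) factors as ψ(h,k) = ( ∏_{ℓ=h}^{k−1} S^{−a(ℓ,k−1)}(ψ(0,k−1))² ) · k, i.e., the concatenation over ℓ = h, h+1, …, k−1 of the square of the word obtained from ψ(0,k−1) by cyclically rotating it a(ℓ,k−1) positions to the right, followed by the single letter k. -/

import Mathlib

/-!
Since φ^h(0) ends with the letter h, write φ^h(0) = u·h; then φ^h(00) = u h u h and
φ(h) = h u h u (h+1). Applying φ^d with k = h + d + 1, and putting A = φ^d(h) = ψ(h,k−1),
B = φ^d(u), gives ψ(h,k) = (AB)² ψ(h+1,k), while ψ(0,k−1) = φ^d(u h) = BA, whose rotation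
to the right by |A| = a(h,k−1) is AB. Iterating in h yields the factorization.
-/

/-- S⁻¹: move the last letter of a nonempty word to the front. -/
def sInv (w : List ℕ) : List ℕ := w.rotate (w.length - 1)

/-- Apply a substitution `f` letterwise to a word (the morphism determined by `f`). -/
def applyM (f : ℕ → List ℕ) (w : List ℕ) : List ℕ := (w.map f).flatten

/-- Fuel-indexed approximation of the morphism φ: `phiAux n` agrees with φ on all
letters `c < n`.  (Computing φ^c(00) only uses φ on letters smaller than `c`, so the
recursion is well-founded in the fuel.) -/
def phiAux : ℕ → ℕ → List ℕ
  | 0, _ => []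
  | n + 1, c => sInv ((applyM (phiAux n))^[c] [0, 0]) ++ [c + 1]

/-- The morphism φ on letters: φ(h) = S⁻¹(φ^h(00))·(h+1).
In particular φ(0) = 001 and φ(1) = 1001002. -/
def phi (c : ℕ) : List ℕ := phiAux (c + 1) c

/-- The morphism φ on words. -/
def phiW (w : List ℕ) : List ℕ := applyM phi w

/-- ψ(h,k) = φ^(k−h)(h). -/
def psi (h k : ℕ) : List ℕ := phiW^[k - h] [h]

/-- a(h,k) = |ψ(h,k)|. -/
def a (h k : ℕ) : ℕ := (psi h k).length

/-- S^(−m): cyclic rotation of a word to the right by `m` positions (taken modulo the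
length), i.e. the last `m mod |w|` letters are moved to the front. -/
def rotR (w : List ℕ) (m : ℕ) : List ℕ := w.rotate (w.length - m % w.length)

section applyM

variable {f g : ℕ → List ℕ}

lemma mem_applyM {w : List ℕ} {x : ℕ} : x ∈ applyM f w ↔ ∃ c ∈ w, x ∈ f c := by
  simp [applyM]

lemma applyM_iterate_append (j : ℕ) (u v : List ℕ) :
    (applyM f)^[j] (u ++ v) = (applyM f)^[j] u ++ (applyM f)^[j] v := by
  induction j generalizing u v with
  | zero => rfl
  | succ j ih => simp only [Function.iterate_succ_apply, applyM, List.map_append,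
      List.flatten_append, ih]

lemma le_add_of_mem_applyM_iterate (hf : ∀ c, ∀ x ∈ f c, x ≤ c + 1) (j : ℕ) {w : List ℕ}
    {b : ℕ} (hw : ∀ x ∈ w, x ≤ b) : ∀ x ∈ (applyM f)^[j] w, x ≤ b + j := by
  induction j generalizing w b with
  | zero => exact hw
  | succ j ih =>
    rw [Function.iterate_succ_apply, add_comm j 1, ← add_assoc]
    refine ih fun x hx => ?_
    obtain ⟨c, hc, hxc⟩ := mem_applyM.mp hx
    exact (hf c x hxc).trans (Nat.succ_le_succ (hw c hc))

lemma applyM_iterate_congr {N : ℕ} (hfg : ∀ c < N, f c = g c)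
    (hf : ∀ c, ∀ x ∈ f c, x ≤ c + 1) (j : ℕ) {w : List ℕ} (hw : ∀ x ∈ w, x + j ≤ N) :
    (applyM f)^[j] w = (applyM g)^[j] w := by
  induction j generalizing w with
  | zero => rfl
  | succ j ih =>
    have hfw : applyM f w = applyM g w :=
      congrArg List.flatten (List.map_congr_left fun c hc => hfg c (by have := hw c hc; omega))
    rw [Function.iterate_succ_apply, Function.iterate_succ_apply, ← hfw]
    refine ih fun x hx => ?_
    obtain ⟨c, hc, hxc⟩ := mem_applyM.mp hx
    have := hf c x hxc
    have := hw c hc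
    omega

end applyM

lemma phiAux_le (n c : ℕ) : ∀ x ∈ phiAux n c, x ≤ c + 1 := by
  induction n generalizing c with
  | zero => simp [phiAux]
  | succ n ih =>
    intro x hx
    rcases List.mem_append.mp hx with hx | hx
    · have := le_add_of_mem_applyM_iterate ih c (b := 0) (by simp) x (List.mem_rotate.mp hx)
      omega
    · simp_all

lemma phiAux_succ (n c : ℕ) (hc : c ≤ n) :
    phiAux (n + 1) c = sInv (phiW^[c] [0, 0]) ++ [c + 1] := by
  induction n using Nat.strong_induction_on generalizing c with
  | _ n ih =>
    have agree : ∀ c' < c, phiAux n c' = phi c' := by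
      intro c' hc'
      obtain ⟨m, rfl⟩ := Nat.exists_eq_add_one_of_ne_zero (by omega : n ≠ 0)
      rw [phi, ih m (by omega) c' (by omega), ih c' (by omega) c' le_rfl]
    show sInv ((applyM (phiAux n))^[c] [0, 0]) ++ [c + 1] = _
    rw [applyM_iterate_congr agree (phiAux_le n) c (by simp)]
    rfl

lemma phi_eq (c : ℕ) : phi c = sInv (phiW^[c] [0, 0]) ++ [c + 1] :=
  phiAux_succ c c le_rfl

lemma phiW_iterate_append (j : ℕ) (u v : List ℕ) :
    phiW^[j] (u ++ v) = phiW^[j] u ++ phiW^[j] v :=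
  applyM_iterate_append j u v

lemma phiW_singleton (c : ℕ) : phiW [c] = phi c := by
  simp [phiW, applyM]

lemma exists_phiW_iterate_singleton_eq_append (j h : ℕ) :
    ∃ u, phiW^[j] [h] = u ++ [h + j] := by
  induction j generalizing h with
  | zero => exact ⟨[], rfl⟩
  | succ j ih =>
    obtain ⟨u, hu⟩ := ih (h + 1)
    refine ⟨phiW^[j] (sInv (phiW^[h] [0, 0])) ++ u, ?_⟩
    rw [Function.iterate_succ_apply, phiW_singleton, phi_eq, phiW_iterate_append, hu,
      List.append_assoc, add_right_comm, add_assoc]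

lemma sInv_append_singleton (w : List ℕ) (c : ℕ) : sInv (w ++ [c]) = c :: w := by
  simp [sInv, List.rotate_eq_drop_append_take (by simp : w.length ≤ (w ++ [c]).length)]

lemma phi_eq_of_phiW_iterate {h : ℕ} {u : List ℕ} (hu : phiW^[h] [0] = u ++ [h]) :
    phi h = [h] ++ u ++ ([h] ++ u) ++ [h + 1] := by
  rw [phi_eq, show ([0, 0] : List ℕ) = [0] ++ [0] from rfl, phiW_iterate_append, hu,
    ← List.append_assoc, sInv_append_singleton]
  simp

lemma rotR_append_length (A B : List ℕ) : rotR (B ++ A) A.length = A ++ B := by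
  obtain rfl | hB := eq_or_ne B []
  · simp [rotR, List.rotate_length]
  · have hlt : A.length < (B ++ A).length := by simpa using List.length_pos_iff_ne_nil.mpr hB
    rw [rotR, Nat.mod_eq_of_lt hlt, List.length_append, Nat.add_sub_cancel,
      List.rotate_append_length_eq]

lemma psi_eq_append {h k : ℕ} (hhk : h < k) :
    psi h k = rotR (psi 0 (k - 1)) (a h (k - 1)) ++ rotR (psi 0 (k - 1)) (a h (k - 1)) ++
      psi (h + 1) k := by
  obtain ⟨d, rfl⟩ : ∃ d, k = h + d + 1 := ⟨k - h - 1, by omega⟩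
  obtain ⟨u, hu⟩ := exists_phiW_iterate_singleton_eq_append h 0
  rw [zero_add] at hu
  have hA : psi h (h + d) = phiW^[d] [h] := by simp [psi]
  have hBA : psi 0 (h + d) = phiW^[d] u ++ phiW^[d] [h] := by
    rw [psi, Nat.sub_zero, add_comm, Function.iterate_add_apply, hu, phiW_iterate_append]
  have hAB : psi h (h + d + 1) = phiW^[d] [h] ++ phiW^[d] u ++ (phiW^[d] [h] ++ phiW^[d] u) ++
      psi (h + 1) (h + d + 1) := by
    rw [psi, psi, show h + d + 1 - h = d + 1 by omega, show h + d + 1 - (h + 1) = d by omega,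
      Function.iterate_succ_apply, phiW_singleton, phi_eq_of_phiW_iterate hu]
    simp only [phiW_iterate_append]
  rw [Nat.add_sub_cancel, a, hA, hBA, rotR_append_length, hAB]

/-- For h ≤ k, ψ(h,k) is the concatenation, over ℓ = h, …, k−1, of the squares of the
rotations S^(−a(ℓ,k−1))(ψ(0,k−1)), followed by the single letter k. -/
theorem psi_factorization (h k : ℕ) (hhk : h ≤ k) :
    psi h k =
      ((List.range (k - h)).map fun i =>
        rotR (psi 0 (k - 1)) (a (h + i) (k - 1)) ++
        rotR (psi 0 (k - 1)) (a (h + i) (k - 1))).flatten ++ [k] := by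
  induction hd : k - h generalizing h with
  | zero =>
    obtain rfl : h = k := by omega
    simp [psi]
  | succ d ih =>
    rw [psi_eq_append (by omega), ih (h + 1) (by omega) (by omega), List.range_succ_eq_map]
    simp only [List.map_cons, List.map_map, Function.comp_def, List.flatten_cons, add_zero,
      List.append_assoc, Nat.succ_eq_add_one, add_assoc, add_comm 1]
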